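/- Under the Setup: for every vertex w_1 ∈ e_1 ∖ U we have N_H(w_1) ⊆ F ∖ {e_t}, and for every vertex w_2 ∈ e_t ∖ U we have N_H(w_2) ⊆ F ∖ {e_1}. Consequently N_H(e_1 ∖ U) ⊆ F ∖ {e_t} and N_H(e_t ∖ U) ⊆ F ∖ {e_1}. -/

import Mathlib

/-!
Let `U` be the set of internal vertices and `w ∈ e 1 \ U`. If `w ∈ e t`, then
`w, v 1, …, v (t - 1)` with `e 1, …, e t` is a Berge cycle of length `t`. Otherwise, if a
hyperedge `h ∋ w` occurred in `E` more often than among `e 1, …, e (t - 1)`, then `h` would be a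
further hyperedge besides `e 1, …, e t`. Since `t < k ≤ r`, both `h` and `e t` have more than `t`
vertices, so there is a fresh `u ∈ h` and then a fresh `z ∈ e t`, and `u, w, v 1, …, v (t - 1), z`
is a Berge path of length `t + 1`, contradicting maximality. Reversing the path gives the claim
for `e t`.
-/

namespace BergeM

def MIsBergePath {n : ℕ} (E : Multiset (Finset (Fin n))) (k : ℕ)
    (v : Fin (k + 1) → Fin n) (f : Fin k → Finset (Fin n)) : Prop :=
  Function.Injective v ∧ (↑(List.ofFn f) : Multiset (Finset (Fin n))) ≤ E ∧
    ∀ i : Fin k, v i.castSucc ∈ f i ∧ v i.succ ∈ f i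

def MHasBergePath {n : ℕ} (E : Multiset (Finset (Fin n))) (k : ℕ) : Prop :=
  ∃ v f, MIsBergePath E k v f

def MBPFree {n : ℕ} (E : Multiset (Finset (Fin n))) (k : ℕ) : Prop :=
  ¬ MHasBergePath E k

def MConnected {n : ℕ} (E : Multiset (Finset (Fin n))) : Prop :=
  ∀ x y : Fin n, ∃ (k : ℕ) (v : Fin (k + 1) → Fin n) (f : Fin k → Finset (Fin n)),
    MIsBergePath E k v f ∧ (∃ i, v i = x) ∧ (∃ i, v i = y)

def MUniform {n : ℕ} (E : Multiset (Finset (Fin n))) (r : ℕ) : Prop :=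
  ∀ e ∈ E, e.card = r

def MIsBergeCycle {n : ℕ} (E : Multiset (Finset (Fin n))) (k : ℕ)
    (v : Fin k → Fin n) (f : Fin k → Finset (Fin n)) : Prop :=
  Function.Injective v ∧ (↑(List.ofFn f) : Multiset (Finset (Fin n))) ≤ E ∧
    ∀ i : Fin k, v i ∈ f i ∧ v ⟨(i.val + 1) % k, Nat.mod_lt _ i.pos⟩ ∈ f i

def MHasBergeCycle {n : ℕ} (E : Multiset (Finset (Fin n))) (k : ℕ) : Prop :=
  ∃ v f, MIsBergeCycle E k v f

def edgeNbhd {n : ℕ} (E : Multiset (Finset (Fin n))) (S : Finset (Fin n)) :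
    Multiset (Finset (Fin n)) :=
  E.filter fun e => (e ∩ S).Nonempty

variable {n : ℕ}

lemma ofFn_eq_map_range {α : Type*} (m : ℕ) (g : ℕ → α) :
    List.ofFn (fun i : Fin m => g i) = (List.range m).map g := by
  apply List.ext_getElem <;> simp

lemma coe_map_range_eq_of_eq_rev {α : Type*} {m : ℕ} {f g : ℕ → α}
    (hfg : ∀ i < m, f i = g (m - 1 - i)) :
    (↑((List.range m).map f) : Multiset α) = ↑((List.range m).map g) := by
  rw [← Multiset.coe_reverse, ← List.map_reverse, List.range_eq_range', List.reverse_range',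
    List.map_map, ← List.range_eq_range', zero_add]
  refine congrArg _ (List.map_congr_left fun i hi => ?_)
  rw [List.mem_range] at hi
  rw [Function.comp_apply, hfg _ (by omega), show m - 1 - (m - 1 - i) = i by omega]

lemma image_Icc_sub_eq {α : Type*} [DecidableEq α] (v : ℕ → α) (t : ℕ) :
    (Finset.Icc 1 (t - 1)).image (fun i => v (t - i)) = (Finset.Icc 1 (t - 1)).image v := by
  ext x
  simp only [Finset.mem_image, Finset.mem_Icc]
  constructor <;> rintro ⟨i, hi, rfl⟩
  · exact ⟨t - i, by omega, rfl⟩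
  · exact ⟨t - i, by omega, by rw [Nat.sub_sub_self (by omega)]⟩

lemma last_mem_coe_map_range {α : Type*} {t : ℕ} (g : ℕ → α) (ht : 1 ≤ t) :
    g t ∈ (↑((List.range t).map fun i => g (i + 1)) : Multiset α) :=
  Multiset.mem_coe.2 (List.mem_map.2
    ⟨t - 1, List.mem_range.2 (by omega), by rw [Nat.sub_add_cancel ht]⟩)

lemma MHasBergePath.mono {E : Multiset (Finset (Fin n))} {s t : ℕ} (hp : MHasBergePath E t)
    (hst : s ≤ t) : MHasBergePath E s := by
  obtain ⟨v, f, hinj, hle, hadj⟩ := hp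
  refine ⟨Fin.take (s + 1) (by omega) v, Fin.take s hst f,
    hinj.comp (Fin.castLE_injective _), le_trans ?_ hle, fun i => hadj (Fin.castLE hst i)⟩
  rw [Fin.ofFn_take_eq_take_ofFn]
  exact Multiset.coe_le.mpr (List.take_sublist _ _).subperm

lemma mHasBergeCycle_zero (E : Multiset (Finset (Fin n))) : MHasBergeCycle E 0 :=
  ⟨Fin.elim0, Fin.elim0, fun i => i.elim0, by simp, fun i => i.elim0⟩

lemma mIsBergePath_comp_val {E : Multiset (Finset (Fin n))} {k : ℕ} {V : ℕ → Fin n}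
    {f : ℕ → Finset (Fin n)} (hV : Set.InjOn V (Set.Iic k))
    (hE : (↑((List.range k).map f) : Multiset (Finset (Fin n))) ≤ E)
    (hadj : ∀ i < k, V i ∈ f i ∧ V (i + 1) ∈ f i) :
    MIsBergePath E k (fun i => V i) (fun i => f i) := by
  refine ⟨fun a b hab => Fin.ext (hV (Set.mem_Iic.2 (Nat.lt_succ_iff.1 a.2))
    (Set.mem_Iic.2 (Nat.lt_succ_iff.1 b.2)) hab), by rwa [ofFn_eq_map_range], fun i => hadj i i.2⟩

lemma mIsBergeCycle_comp_val {E : Multiset (Finset (Fin n))} {k : ℕ} {V : ℕ → Fin n}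
    {f : ℕ → Finset (Fin n)} (hV : Set.InjOn V (Set.Iio k))
    (hE : (↑((List.range k).map f) : Multiset (Finset (Fin n))) ≤ E)
    (hadj : ∀ i < k, V i ∈ f i ∧ V ((i + 1) % k) ∈ f i) :
    MIsBergeCycle E k (fun i => V i) (fun i => f i) :=
  ⟨fun a b hab => Fin.ext (hV a.2 b.2 hab), by rwa [ofFn_eq_map_range], fun i => hadj i i.2⟩

lemma MIsBergePath.cons {E : Multiset (Finset (Fin n))} {k : ℕ} {v : Fin (k + 1) → Fin n}
    {f : Fin k → Finset (Fin n)} (hp : MIsBergePath E k v f) {u : Fin n} {h : Finset (Fin n)}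
    (hu : u ∈ h) (hv : v 0 ∈ h) (huv : u ∉ Set.range v)
    (hE : h ::ₘ ↑(List.ofFn f) ≤ E) :
    MIsBergePath E (k + 1) (Fin.cons u v) (Fin.cons h f) := by
  refine ⟨Fin.cons_injective_iff.2 ⟨huv, hp.1⟩,
    by rwa [List.ofFn_cons, ← Multiset.cons_coe], ?_⟩
  intro i
  cases i using Fin.cases with
  | zero => exact ⟨hu, hv⟩
  | succ i => simpa [← Fin.succ_castSucc] using hp.2.2 i

lemma edgeNbhd_le_of_forall_singleton {E : Multiset (Finset (Fin n))} {S : Finset (Fin n)}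
    {L : Multiset (Finset (Fin n))} (hS : ∀ w ∈ S, edgeNbhd E {w} ≤ L) :
    edgeNbhd E S ≤ L := by
  classical
  rw [Multiset.le_iff_count]
  intro h
  rw [edgeNbhd, Multiset.count_filter]
  split_ifs with hhS
  · obtain ⟨w, hw⟩ := hhS
    obtain ⟨hwh, hwS⟩ := Finset.mem_inter.1 hw
    simpa [edgeNbhd, Multiset.count_filter, hwh] using Multiset.count_le_of_le h (hS w hwS)
  · exact Nat.zero_le _

lemma edgeNbhd_singleton (E : Multiset (Finset (Fin n))) (w : Fin n) :
    edgeNbhd E {w} = E.filter (w ∈ ·) :=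
  Multiset.filter_congr fun f _ => by simp [Finset.Nonempty]

/-- The hyperedges `e 1, …, e t` and internal vertices `v 1, …, v (t - 1)` of a Berge path of
length `t`; its two end vertices are not part of the data. -/
structure IsBergePathSkeleton (E : Multiset (Finset (Fin n))) (t : ℕ) (e : ℕ → Finset (Fin n))
    (v : ℕ → Fin n) : Prop where
  edges_le : (↑((List.range t).map fun i => e (i + 1)) : Multiset (Finset (Fin n))) ≤ E
  injOn : Set.InjOn v (Set.Icc 1 (t - 1))
  mem_left : ∀ i, 1 ≤ i → i ≤ t - 1 → v i ∈ e i
  mem_right : ∀ i, 1 ≤ i → i ≤ t - 1 → v i ∈ e (i + 1)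

def withEnds (v : ℕ → Fin n) (t : ℕ) (w z : Fin n) (i : ℕ) : Fin n :=
  if i = 0 then w else if i = t then z else v i

namespace IsBergePathSkeleton

variable {E : Multiset (Finset (Fin n))} {t : ℕ} {e : ℕ → Finset (Fin n)} {v : ℕ → Fin n}

lemma of_mem (he : (↑((List.range t).map fun i => e (i + 1)) : Multiset (Finset (Fin n))) ≤ E)
    (hvinj : Set.InjOn v (Set.Icc 1 (t - 1))) (hv1 : v 1 ∈ e 1) (hvt : v (t - 1) ∈ e t)
    (hvmid : ∀ i : ℕ, 2 ≤ i → i ≤ t - 1 → v (i - 1) ∈ e i ∧ v i ∈ e i) :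
    IsBergePathSkeleton E t e v where
  edges_le := he
  injOn := hvinj
  mem_left i hi1 hit := by
    obtain rfl | hi2 := eq_or_lt_of_le hi1
    · exact hv1
    · exact (hvmid i hi2 hit).2
  mem_right i hi1 hit := by
    obtain rfl | hit' := eq_or_lt_of_le hit
    · rwa [Nat.sub_add_cancel (by omega)]
    · simpa using (hvmid (i + 1) (by omega) hit').1

lemma reverse (hs : IsBergePathSkeleton E t e v) :
    IsBergePathSkeleton E t (fun i => e (t + 1 - i)) (fun i => v (t - i)) where
  edges_le := by
    rw [coe_map_range_eq_of_eq_rev (g := fun i => e (i + 1)) fun i hi => by grind]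
    exact hs.edges_le
  injOn a ha b hb hab := by
    rw [Set.mem_Icc] at ha hb
    have := hs.injOn (Set.mem_Icc.2 ⟨by omega, by omega⟩) (Set.mem_Icc.2 ⟨by omega, by omega⟩) hab
    omega
  mem_left i hi1 hit := by
    simpa [show t + 1 - i = t - i + 1 by omega] using hs.mem_right (t - i) (by omega) (by omega)
  mem_right i hi1 hit := by
    simpa [show t + 1 - (i + 1) = t - i by omega] using hs.mem_left (t - i) (by omega) (by omega)

lemma withEnds_mem (hs : IsBergePathSkeleton E t e v) {w z : Fin n} (hw : w ∈ e 1)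
    (hz : z ∈ e t) (i : ℕ) (hi : i < t) :
    withEnds v t w z i ∈ e (i + 1) ∧ withEnds v t w z (i + 1) ∈ e (i + 1) := by
  constructor
  · rw [withEnds]
    split_ifs with h0
    · rwa [h0]
    · omega
    · exact hs.mem_right i (by omega) (by omega)
  · rw [withEnds, if_neg (Nat.succ_ne_zero i)]
    split_ifs with ht
    · rwa [ht]
    · exact hs.mem_left (i + 1) (by omega) (by omega)

lemma withEnds_injOn_Iio (hs : IsBergePathSkeleton E t e v) {w z : Fin n}
    (hw : w ∉ (Finset.Icc 1 (t - 1)).image v) : Set.InjOn (withEnds v t w z) (Set.Iio t) := by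
  intro a ha b hb hab
  simp only [Set.mem_Iio] at ha hb
  unfold withEnds at hab
  have hinj := hs.injOn
  simp only [Finset.mem_image, Finset.mem_Icc, not_exists, not_and] at hw
  split_ifs at hab <;> grind [Set.InjOn]

lemma withEnds_injOn_Iic (hs : IsBergePathSkeleton E t e v) {w z : Fin n}
    (hw : w ∉ (Finset.Icc 1 (t - 1)).image v) (hz : z ∉ (Finset.Icc 1 (t - 1)).image v)
    (hwz : w ≠ z) : Set.InjOn (withEnds v t w z) (Set.Iic t) := by
  intro a ha b hb hab
  simp only [Set.mem_Iic] at ha hb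
  unfold withEnds at hab
  have hinj := hs.injOn
  simp only [Finset.mem_image, Finset.mem_Icc, not_exists, not_and] at hw hz
  split_ifs at hab <;> grind [Set.InjOn]

lemma mHasBergeCycle (hs : IsBergePathSkeleton E t e v) {w : Fin n}
    (hw1 : w ∈ e 1) (hwt : w ∈ e t) (hwU : w ∉ (Finset.Icc 1 (t - 1)).image v) :
    MHasBergeCycle E t := by
  refine ⟨_, _, mIsBergeCycle_comp_val (V := withEnds v t w w) (hs.withEnds_injOn_Iio hwU)
    hs.edges_le fun i hi => ?_⟩
  have hwrap : withEnds v t w w ((i + 1) % t) = withEnds v t w w (i + 1) := by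
    rcases (Nat.succ_le_of_lt hi).eq_or_lt with hit | hit
    · simp [withEnds, ← hit]
    · rw [Nat.mod_eq_of_lt hit]
  rw [hwrap]
  exact hs.withEnds_mem hw1 hwt i hi

lemma mHasBergePath_succ (hs : IsBergePathSkeleton E t e v) (ht : 1 ≤ t) {r : ℕ} (htr : t < r)
    (hu : MUniform E r) {w : Fin n} (hw1 : w ∈ e 1) (hwU : w ∉ (Finset.Icc 1 (t - 1)).image v)
    (hwt : w ∉ e t) {h : Finset (Fin n)} (hwh : w ∈ h)
    (hE : h ::ₘ ↑((List.range t).map fun i => e (i + 1)) ≤ E) : MHasBergePath E (t + 1) := by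
  set U := (Finset.Icc 1 (t - 1)).image v
  have hU : ∀ x, (insert x U).card < r := fun x => by
    have : U.card ≤ t - 1 := Finset.card_image_le.trans (by simp)
    have := Finset.card_insert_le x U
    omega
  obtain ⟨u, huh, huU⟩ : ∃ u ∈ h, u ∉ insert w U := by
    refine Finset.exists_mem_notMem_of_card_lt_card ?_
    rw [hu h (Multiset.mem_of_le hE (Multiset.mem_cons_self _ _))]
    exact hU w
  obtain ⟨z, hzt, hzU⟩ : ∃ z ∈ e t, z ∉ insert u U := by
    refine Finset.exists_mem_notMem_of_card_lt_card ?_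
    rw [hu _ (Multiset.mem_of_le hs.edges_le (last_mem_coe_map_range e ht))]
    exact hU u
  simp only [Finset.mem_insert, not_or] at huU hzU
  have hp := mIsBergePath_comp_val
    (hs.withEnds_injOn_Iic hwU hzU.2 (ne_of_mem_of_not_mem hzt hwt).symm) hs.edges_le
    (hs.withEnds_mem hw1 hzt)
  refine ⟨_, _, hp.cons huh (by simpa [withEnds] using hwh) ?_
    (by rwa [ofFn_eq_map_range t fun i => e (i + 1)])⟩
  rintro ⟨i, hi⟩
  simp only [withEnds] at hi
  split_ifs at hi with h0 hit
  · exact huU.1 hi.symm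
  · exact hzU.1 hi
  · exact huU.2 (Finset.mem_image.2 ⟨i, Finset.mem_Icc.2 ⟨by omega, by omega⟩, hi⟩)

lemma edgeNbhd_singleton_le (hs : IsBergePathSkeleton E t e v) {r : ℕ} (htr : t < r)
    (hu : MUniform E r) (hmax : ∀ s : ℕ, MHasBergePath E s → s ≤ t)
    (hcyc : ¬ MHasBergeCycle E t) {w : Fin n} (hw1 : w ∈ e 1)
    (hwU : w ∉ (Finset.Icc 1 (t - 1)).image v) :
    edgeNbhd E {w} ≤
      (↑((List.range (t - 1)).map fun i => e (i + 1)) : Multiset (Finset (Fin n))) := by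
  have ht : 1 ≤ t := Nat.one_le_iff_ne_zero.2 fun h0 => hcyc (h0 ▸ mHasBergeCycle_zero E)
  have hwt : w ∉ e t := fun hwt => hcyc (hs.mHasBergeCycle hw1 hwt hwU)
  obtain ⟨R, hR⟩ := Multiset.le_iff_exists_add.1 hs.edges_le
  have hRw : ∀ h ∈ R, w ∉ h := by
    intro h hhR hwh
    refine (hmax _ (hs.mHasBergePath_succ ht htr hu hw1 hwU hwt hwh ?_)).not_gt
      (Nat.lt_succ_self t)
    rw [hR, ← Multiset.singleton_add, add_comm]
    gcongr
    exact Multiset.singleton_le.2 hhR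
  have hsplit : (↑((List.range t).map fun i => e (i + 1)) : Multiset (Finset (Fin n))) =
      ↑((List.range (t - 1)).map fun i => e (i + 1)) + {e t} := by
    obtain ⟨s, rfl⟩ := Nat.exists_eq_add_of_le' ht
    simp [List.range_succ, ← Multiset.coe_add]
  rw [edgeNbhd_singleton, hR, Multiset.filter_add, Multiset.filter_eq_nil.2 hRw, add_zero, hsplit,
    Multiset.filter_add, Multiset.filter_singleton, if_neg hwt, Multiset.empty_eq_zero, add_zero]
  exact Multiset.filter_le _ _

end IsBergePathSkeleton

theorem stmt13_general    (n r k t : ℕ) (hrk : k ≤ r)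
    (E : Multiset (Finset (Fin n))) (hu : MUniform E r)
    (hf : MBPFree E k)
    (ht : MHasBergePath E t) (hmax : ∀ s : ℕ, MHasBergePath E s → s ≤ t)
    (hcyc : ¬ MHasBergeCycle E t)
    (e : ℕ → Finset (Fin n)) (v : ℕ → Fin n)
    (he : (↑((List.range t).map fun i => e (i + 1)) : Multiset (Finset (Fin n))) ≤ E)
    (hvinj : Set.InjOn v (Set.Icc 1 (t - 1)))
    (hv1 : v 1 ∈ e 1) (hvt : v (t - 1) ∈ e t)
    (hvmid : ∀ i : ℕ, 2 ≤ i → i ≤ t - 1 → v (i - 1) ∈ e i ∧ v i ∈ e i)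
 :
    (∀ w ∈ e 1 \ (Finset.Icc 1 (t - 1)).image v,
        edgeNbhd E {w} ≤
          (↑((List.range (t - 1)).map fun i => e (i + 1)) : Multiset (Finset (Fin n)))) ∧
    (∀ w ∈ e t \ (Finset.Icc 1 (t - 1)).image v,
        edgeNbhd E {w} ≤
          (↑((List.range (t - 1)).map fun i => e (i + 2)) : Multiset (Finset (Fin n)))) ∧
    edgeNbhd E (e 1 \ (Finset.Icc 1 (t - 1)).image v) ≤
      (↑((List.range (t - 1)).map fun i => e (i + 1)) : Multiset (Finset (Fin n))) ∧
    edgeNbhd E (e t \ (Finset.Icc 1 (t - 1)).image v) ≤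
      (↑((List.range (t - 1)).map fun i => e (i + 2)) : Multiset (Finset (Fin n))) := by
  have htr : t < r := (lt_of_not_ge fun hkt => hf (ht.mono hkt)).trans_le hrk
  have hs := IsBergePathSkeleton.of_mem he hvinj hv1 hvt hvmid
  have hfirst : ∀ w ∈ e 1 \ (Finset.Icc 1 (t - 1)).image v,
      edgeNbhd E {w} ≤ ↑((List.range (t - 1)).map fun i => e (i + 1)) := fun w hw =>
    hs.edgeNbhd_singleton_le htr hu hmax hcyc (Finset.mem_sdiff.1 hw).1 (Finset.mem_sdiff.1 hw).2
  have hlast : ∀ w ∈ e t \ (Finset.Icc 1 (t - 1)).image v,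
      edgeNbhd E {w} ≤ ↑((List.range (t - 1)).map fun i => e (i + 2)) := by
    intro w hw
    rw [Finset.mem_sdiff, ← image_Icc_sub_eq] at hw
    have := hs.reverse.edgeNbhd_singleton_le htr hu hmax hcyc (w := w) (by simpa using hw.1) hw.2
    rwa [coe_map_range_eq_of_eq_rev (g := fun i => e (i + 2)) fun i hi => by grind] at this
  exact ⟨hfirst, hlast, edgeNbhd_le_of_forall_singleton hfirst,
    edgeNbhd_le_of_forall_singleton hlast⟩

theorem stmt13    (n r k t : ℕ) (hk : 3 ≤ k) (hrk : k ≤ r) (hn : r < n)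
    (E : Multiset (Finset (Fin n))) (hu : MUniform E r) (hc : MConnected E)
    (hf : MBPFree E k)
    (ht : MHasBergePath E t) (hmax : ∀ s : ℕ, MHasBergePath E s → s ≤ t)
    (hcyc : ¬ MHasBergeCycle E t)
    (e : ℕ → Finset (Fin n)) (v : ℕ → Fin n)
    (he : (↑((List.range t).map fun i => e (i + 1)) : Multiset (Finset (Fin n))) ≤ E)
    (hvinj : Set.InjOn v (Set.Icc 1 (t - 1)))
    (hv1 : v 1 ∈ e 1) (hvt : v (t - 1) ∈ e t)
    (hvmid : ∀ i : ℕ, 2 ≤ i → i ≤ t - 1 → v (i - 1) ∈ e i ∧ v i ∈ e i)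
 :
    (∀ w ∈ e 1 \ (Finset.Icc 1 (t - 1)).image v,
        edgeNbhd E {w} ≤
          (↑((List.range (t - 1)).map fun i => e (i + 1)) : Multiset (Finset (Fin n)))) ∧
    (∀ w ∈ e t \ (Finset.Icc 1 (t - 1)).image v,
        edgeNbhd E {w} ≤
          (↑((List.range (t - 1)).map fun i => e (i + 2)) : Multiset (Finset (Fin n)))) ∧
    edgeNbhd E (e 1 \ (Finset.Icc 1 (t - 1)).image v) ≤
      (↑((List.range (t - 1)).map fun i => e (i + 1)) : Multiset (Finset (Fin n))) ∧
    edgeNbhd E (e t \ (Finset.Icc 1 (t - 1)).image v) ≤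
      (↑((List.range (t - 1)).map fun i => e (i + 2)) : Multiset (Finset (Fin n))) :=
  stmt13_general n r k t hrk E hu hf ht hmax hcyc e v he hvinj hv1 hvt hvmid

end BergeM
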